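/- Let S be a multiset of n positive integers, let β ≥ 0 be an integer, and let p be a positive integer. Let m* be the least integer m ≥ β such that the pair of rounded multisets (R_p([m]), R_p([m−β])) double-covers R_p(S). Then (a) the pair ([m'], [m'−β]) with m' = m* + ⌈m*/p⌉ double-covers S, and (b) m* ≤ OPT(S, β) + ⌈n/p⌉, where OPT(S, β) is the Double Prefix Covering optimum. -/

import Mathlib

/-- `(C, D)` double-covers `S`: each element `ℓᵢ` of `S` is assigned a value `c i`
(either `0` or an element of `C`) and a value `d i` (either `0` or an element of `D`),
each element of `C` (resp. `D`) being used at most as many times as its multiplicity,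
such that `c i + d i ≥ ℓᵢ` for all `i`. -/
def DoubleCovers (C D S : Multiset ℕ) : Prop :=
  ∃ T : Multiset (ℕ × ℕ × ℕ),
    T.map (fun x => x.1) = S ∧
    Multiset.filter (fun x => x ≠ 0) (T.map fun x => x.2.1) ≤ C ∧
    Multiset.filter (fun x => x ≠ 0) (T.map fun x => x.2.2) ≤ D ∧
    ∀ x ∈ T, x.1 ≤ x.2.1 + x.2.2

/-- The Double Prefix Covering optimum: the least `m ≥ β` such that
`([m], [m − β])` double-covers `S`. -/
noncomputable def doubleOPT (S : Multiset ℕ) (β : ℕ) : ℕ :=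
  sInf {m | β ≤ m ∧ DoubleCovers (Finset.Icc 1 m).val (Finset.Icc 1 (m - β)).val S}

/-- The rounded set `R_p(S)`: list `S` in non-increasing order, cut the list into
consecutive blocks of size `⌈|S|/p⌉` (the last block possibly smaller), and replace
every element by the maximum element of its block. -/
def roundedSet (p : ℕ) (S : Multiset ℕ) : Multiset ℕ :=
  let l := S.sort (· ≥ ·)
  let b := (S.card + p - 1) / p
  ((List.range l.length).map fun idx => l.getD (idx / b * b) 0 : List ℕ)

/-!
Say that `A` dominates `B` when `B` can be matched injectively into `A` with every element of
`B` at most its partner. Double covering is monotone for domination: it survives replacing the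
two covering multisets by dominating ones and the covered multiset by a dominated one. Rounding
only raises elements, so `R_p(X)` dominates `X`.

(a) `[m + ⌈m/p⌉]` dominates `R_p([m])`: inside a block of `⌈m/p⌉` consecutive values, rounding
raises a value by less than the block size; likewise `[m + ⌈m/p⌉ - β]` dominates `R_p([m - β])`.

(b) Take an optimal cover of `S` by `([OPT], [OPT - β])` and let `b = ⌈n/p⌉`. The first block
of `R_p(S)` consists of at most `b` copies of `max S ≤ OPT + (OPT - β)`, covered by the fresh
pairs `(OPT + 1 + i, OPT - β + 1 + i)`; every later element of `R_p(S)` is at most the element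
`b` places before it in the sorted `S`, so the rest of `R_p(S)` is dominated by `S` and inherits
its cover. Hence `OPT + b` is feasible for the rounded problem; the witness `m'` of (a) shows
that `OPT` exists.
-/

def Dominates {α : Type*} [Preorder α] (A B : Multiset α) : Prop :=
  ∃ A' ≤ A, A'.Rel (· ≥ ·) B

namespace Multiset

variable {α β : Type*} {r : α → β → Prop}

theorem Rel.exists_rel_of_le_right {s : Multiset α} {t t' : Multiset β} (h : Rel r s t)
    (ht : t' ≤ t) : ∃ s' ≤ s, Rel r s' t' := by
  induction h generalizing t' with
  | zero => exact ⟨0, le_rfl, by rw [nonpos_iff_eq_zero.1 ht]; exact .zero⟩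
  | @cons a b s t hab _ ih =>
    by_cases hb : b ∈ t'
    · obtain ⟨t'', rfl⟩ := exists_cons_of_mem hb
      obtain ⟨s', hs', h'⟩ := ih ((cons_le_cons_iff b).1 ht)
      exact ⟨a ::ₘ s', (cons_le_cons_iff a).2 hs', h'.cons hab⟩
    · obtain ⟨s', hs', h'⟩ := ih ((le_cons_of_notMem hb).1 ht)
      exact ⟨s', hs'.trans (le_cons_self s a), h'⟩

theorem Rel.exists_zip {s : Multiset α} {t : Multiset β} (h : Rel r s t) :
    ∃ U : Multiset (α × β),
      U.map Prod.fst = s ∧ U.map Prod.snd = t ∧ ∀ u ∈ U, r u.1 u.2 := by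
  induction h with
  | zero => exact ⟨0, rfl, rfl, by simp⟩
  | @cons a b _ _ hab _ ih =>
    obtain ⟨U, rfl, rfl, hU⟩ := ih
    exact ⟨(a, b) ::ₘ U, by simp, by simp, by simpa [hab] using hU⟩

theorem rel_coe_of_forall₂ {l₁ : List α} {l₂ : List β} (h : List.Forall₂ r l₁ l₂) :
    Rel r (l₁ : Multiset α) l₂ := by
  induction h with
  | nil => exact .zero
  | cons hab _ ih => exact ih.cons hab

end Multiset

namespace Dominates

variable {α : Type*} [Preorder α] {A B A₂ B₂ B' : Multiset α}

theorem refl (A : Multiset α) : Dominates A A :=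
  ⟨A, le_rfl, Multiset.rel_refl_of_refl_on fun _ _ => le_rfl⟩

theorem add (h : Dominates A B) (h₂ : Dominates A₂ B₂) : Dominates (A + A₂) (B + B₂) := by
  obtain ⟨A', hA', hAB⟩ := h
  obtain ⟨A₂', hA₂', hAB₂⟩ := h₂
  exact ⟨A' + A₂', add_le_add hA' hA₂', hAB.add hAB₂⟩

theorem anti (h : Dominates A B) (hB : B' ≤ B) : Dominates A B' := by
  obtain ⟨A', hA', hAB⟩ := h
  obtain ⟨A'', hA'', hAB'⟩ := hAB.exists_rel_of_le_right hB
  exact ⟨A'', hA''.trans hA', hAB'⟩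

theorem of_getElem_le {a b : List α} (hlen : b.length ≤ a.length)
    (h : ∀ i (hi : i < b.length), b[i] ≤ a[i]) : Dominates (a : Multiset α) b := by
  refine ⟨a.take b.length, Multiset.coe_le.2 (List.take_sublist _ _).subperm,
    Multiset.rel_coe_of_forall₂ (List.forall₂_iff_get.2 ⟨by simpa using hlen, ?_⟩)⟩
  intro i _ hi
  simpa using h i hi

end Dominates

namespace DoubleCovers

variable {C D S C' D' S' : Multiset ℕ}

theorem swap (h : DoubleCovers C D S) : DoubleCovers D C S := by
  obtain ⟨T, hS, hC, hD, hcov⟩ := h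
  refine ⟨T.map fun x => (x.1, x.2.2, x.2.1), ?_, ?_, ?_, ?_⟩
  · simpa [Multiset.map_map] using hS
  · simpa [Multiset.map_map] using hD
  · simpa [Multiset.map_map] using hC
  · rw [Multiset.forall_mem_map_iff]
    exact fun t ht => (hcov t ht).trans_eq (add_comm _ _)

theorem add (h : DoubleCovers C D S) (h' : DoubleCovers C' D' S') :
    DoubleCovers (C + C') (D + D') (S + S') := by
  obtain ⟨T, rfl, hC, hD, hcov⟩ := h
  obtain ⟨T', rfl, hC', hD', hcov'⟩ := h'
  refine ⟨T + T', by simp, ?_, ?_, ?_⟩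
  · rw [Multiset.map_add, Multiset.filter_add]; exact add_le_add hC hC'
  · rw [Multiset.map_add, Multiset.filter_add]; exact add_le_add hD hD'
  · intro x hx
    rcases Multiset.mem_add.1 hx with hx | hx
    exacts [hcov x hx, hcov' x hx]

theorem replicate {x y v : ℕ} (k : ℕ) (hv : v ≤ x + y) :
    DoubleCovers (.replicate k x) (.replicate k y) (.replicate k v) := by
  refine ⟨.replicate k (v, x, y), by simp, ?_, ?_, ?_⟩
  · rw [Multiset.map_replicate]; exact Multiset.filter_le _ _
  · rw [Multiset.map_replicate]; exact Multiset.filter_le _ _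
  · intro u hu
    rw [Multiset.eq_of_mem_replicate hu]
    exact hv

theorem mono_target (hS : Dominates S S') (h : DoubleCovers C D S) : DoubleCovers C D S' := by
  obtain ⟨T, rfl, hC, hD, hcov⟩ := h
  obtain ⟨S₀, hS₀, hS₀S'⟩ := hS
  have hT : T.Rel (fun x a => x.1 = a) (T.map Prod.fst) :=
    Multiset.rel_map_right.2 (Multiset.rel_refl_of_refl_on fun _ _ => rfl)
  obtain ⟨T₀, hT₀, hT₀S₀⟩ := hT.exists_rel_of_le_right hS₀
  obtain rfl : T₀.map Prod.fst = S₀ := Multiset.rel_eq.1 (Multiset.rel_map_left.2 hT₀S₀)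
  rw [Multiset.rel_map_left] at hS₀S'
  obtain ⟨U, rfl, rfl, hU⟩ := hS₀S'.exists_zip
  have hsub (f : ℕ × ℕ → ℕ) :
      (U.map fun u => (u.2, u.1.2)).map (fun x => f x.2) ≤ T.map (fun x => f x.2) := by
    simpa [Multiset.map_map] using Multiset.map_le_map (f := fun x => f x.2) hT₀
  refine ⟨U.map fun u => (u.2, u.1.2), by simp [Multiset.map_map], ?_, ?_, ?_⟩
  · exact (Multiset.filter_le_filter _ (hsub Prod.fst)).trans hC
  · exact (Multiset.filter_le_filter _ (hsub Prod.snd)).trans hD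
  · simp only [Multiset.forall_mem_map_iff]
    intro u hu
    exact (hU u hu).trans (hcov u.1 (Multiset.mem_of_le hT₀ (Multiset.mem_map_of_mem _ hu)))

theorem mono_left (hC : Dominates C' C) (h : DoubleCovers C D S) : DoubleCovers C' D S := by
  obtain ⟨T, rfl, hTC, hD, hcov⟩ := h
  -- padding `C` with zeros absorbs the triples that use no element of `C`
  set Z := Multiset.replicate ((T.map fun x => x.2.1).count 0) 0
  have hle : T.map (fun x => x.2.1) ≤ C + Z := by
    conv_lhs => rw [← Multiset.filter_add_not (· ≠ 0) (T.map fun x => x.2.1)]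
    simp only [not_not, Multiset.filter_eq']
    exact add_le_add_left hTC _
  obtain ⟨A, hA, hAT⟩ := (hC.add (.refl Z)).anti hle
  rw [Multiset.rel_map_right] at hAT
  obtain ⟨U, rfl, hUT, hU⟩ := hAT.exists_zip
  refine ⟨U.map fun u => (u.2.1, u.1, u.2.2.2), ?_, ?_, ?_, ?_⟩
  · simp [← hUT, Multiset.map_map]
  · calc _ = (U.map Prod.fst).filter (· ≠ 0) := by simp [Multiset.map_map]
      _ ≤ (C' + Z).filter (· ≠ 0) := Multiset.filter_le_filter _ hA
      _ ≤ C' := by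
        have hZ : Z.filter (· ≠ 0) = 0 :=
          Multiset.filter_eq_nil.2 fun y hy => by simp [Multiset.eq_of_mem_replicate hy]
        rw [Multiset.filter_add, hZ, add_zero]
        exact Multiset.filter_le _ _
  · simpa [← hUT, Multiset.map_map] using hD
  · simp only [Multiset.forall_mem_map_iff]
    intro u hu
    have := hU u hu
    have := hcov u.2 (hUT ▸ Multiset.mem_map_of_mem _ hu)
    omega

theorem mono_right (hD : Dominates D' D) (h : DoubleCovers C D S) : DoubleCovers C D' S :=
  (h.swap.mono_left hD).swap

theorem mono (hC : Dominates C' C) (hD : Dominates D' D) (hS : Dominates S S')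
    (h : DoubleCovers C D S) : DoubleCovers C' D' S' :=
  ((h.mono_target hS).mono_left hC).mono_right hD

theorem le_add_of_mem {a c x : ℕ} (h : DoubleCovers C D S) (hC : ∀ y ∈ C, y ≤ a)
    (hD : ∀ y ∈ D, y ≤ c) (hx : x ∈ S) : x ≤ a + c := by
  obtain ⟨T, rfl, hTC, hTD, hcov⟩ := h
  obtain ⟨t, ht, rfl⟩ := Multiset.mem_map.1 hx
  have bound {E : Multiset ℕ} {e : ℕ} (f : ℕ × ℕ × ℕ → ℕ)
      (hE : (T.map f).filter (· ≠ 0) ≤ E) (he : ∀ y ∈ E, y ≤ e) : f t ≤ e := by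
    by_cases h0 : f t = 0
    · omega
    · exact he _ <| Multiset.mem_of_le hE <|
        Multiset.mem_filter.2 ⟨Multiset.mem_map_of_mem f ht, h0⟩
  have := hcov t ht
  have := bound _ hTC hC
  have := bound _ hTD hD
  omega

end DoubleCovers

def roundedList (l : List ℕ) (b : ℕ) : List ℕ :=
  (List.range l.length).map fun i => l.getD (i / b * b) 0

theorem roundedSet_eq (p : ℕ) (S : Multiset ℕ) :
    roundedSet p S = roundedList (S.sort (· ≥ ·)) ((S.card + p - 1) / p) := rfl

section roundedList

variable {l : List ℕ} {b : ℕ}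

@[simp]
theorem length_roundedList : (roundedList l b).length = l.length := by
  simp [roundedList]

@[simp]
theorem getElem_roundedList {i : ℕ} (hi : i < (roundedList l b).length) :
    (roundedList l b)[i] =
      l[i / b * b]'((Nat.div_mul_le_self i b).trans_lt (by simpa using hi)) := by
  simp only [roundedList, List.getElem_map, List.getElem_range]
  exact List.getD_eq_getElem _ _ _

theorem mem_of_mem_roundedList {x : ℕ} (hx : x ∈ roundedList l b) : x ∈ l := by
  obtain ⟨i, hi, rfl⟩ := List.getElem_of_mem hx
  rw [getElem_roundedList]
  exact List.getElem_mem _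

theorem getElem_le_getElem_roundedList (hl : l.SortedGE) {i : ℕ} (hi : i < l.length) :
    l[i] ≤ (roundedList l b)[i]'(by simpa using hi) := by
  rw [getElem_roundedList]
  exact List.sortedGE_iff_getElem_ge_getElem_of_le.1 hl (Nat.div_mul_le_self i b)

theorem getElem_roundedList_add_le (hl : l.SortedGE) (hb : 0 < b) {i : ℕ}
    (hi : b + i < l.length) : (roundedList l b)[b + i]'(by simpa using hi) ≤ l[i] := by
  rw [getElem_roundedList]
  apply List.sortedGE_iff_getElem_ge_getElem_of_le.1 hl
  have hblock : (b + i) / b * b = i / b * b + b := by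
    rw [Nat.add_comm, Nat.add_div_right _ hb, Nat.add_mul, one_mul]
  have := Nat.lt_div_mul_add (a := i) hb
  omega

theorem dominates_drop_roundedList (hl : l.SortedGE) (hb : 0 < b) :
    Dominates (l : Multiset ℕ) ((roundedList l b).drop b) := by
  refine Dominates.of_getElem_le (by simp) fun i hi => ?_
  have hi' : b + i < l.length := by simp at hi; omega
  simpa using getElem_roundedList_add_le hl hb hi'

end roundedList

theorem sortedGE_sort {α : Type*} [LinearOrder α] (S : Multiset α) :
    (S.sort (· ≥ ·)).SortedGE :=
  List.sortedGE_iff_pairwise.2 (Multiset.pairwise_sort S _)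

theorem roundedSet_dominates (p : ℕ) (S : Multiset ℕ) : Dominates (roundedSet p S) S := by
  conv_rhs => rw [← Multiset.sort_eq S (· ≥ ·)]
  exact Dominates.of_getElem_le (by simp) fun i hi =>
    getElem_le_getElem_roundedList (sortedGE_sort S) hi

theorem val_Icc_eq_range' (a b : ℕ) :
    (Finset.Icc a b).val = (List.range' a (b + 1 - a) : Multiset ℕ) := by
  rw [Nat.Icc_eq_range']

theorem sort_Icc_one (m : ℕ) :
    (Finset.Icc 1 m).val.sort (· ≥ ·) = (List.range' 1 m).reverse := by
  refine List.Perm.eq_of_sortedGE (sortedGE_sort _) ?_ (Multiset.coe_eq_coe.1 ?_)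
  · exact List.sortedGE_reverse.2 (List.sortedLE_range' 1 m 1)
  · rw [Multiset.sort_eq, Multiset.coe_reverse, val_Icc_eq_range', Nat.add_sub_cancel]

theorem roundedSet_Icc_one (p m : ℕ) : roundedSet p (Finset.Icc 1 m).val =
    roundedList (List.range' 1 m).reverse ((m + p - 1) / p) := by
  rw [roundedSet_eq, sort_Icc_one, Finset.card_val, Nat.card_Icc, Nat.add_sub_cancel]

theorem dominates_Icc_roundedSet_Icc {p m c : ℕ} (hp : 0 < p) (hc : (m + p - 1) / p ≤ c) :
    Dominates (Finset.Icc 1 (m + c)).val (roundedSet p (Finset.Icc 1 m).val) := by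
  rw [roundedSet_Icc_one, val_Icc_eq_range', ← Multiset.coe_reverse]
  refine Dominates.of_getElem_le (by simp) fun i hi => ?_
  simp only [length_roundedList, List.length_reverse, List.length_range'] at hi
  have hb : 0 < (m + p - 1) / p := Nat.div_pos (by omega) hp
  have := Nat.lt_div_mul_add (a := i) hb
  simp only [getElem_roundedList, List.getElem_reverse, List.getElem_range', List.length_range']
  omega

theorem dominates_Icc_replicate (a k : ℕ) :
    Dominates (Finset.Icc (a + 1) (a + k)).val (.replicate k (a + 1)) := by
  rw [val_Icc_eq_range', ← Multiset.coe_replicate]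
  exact Dominates.of_getElem_le (by simp) fun i hi => by simp

theorem val_Icc_one_add (m b : ℕ) : (Finset.Icc 1 (m + b)).val =
    (Finset.Icc 1 m).val + (Finset.Icc (m + 1) (m + b)).val := by
  rw [val_Icc_eq_range', val_Icc_eq_range', val_Icc_eq_range', Multiset.coe_add,
    Nat.add_sub_cancel, Nat.add_sub_cancel, Nat.add_sub_add_right, Nat.add_sub_cancel_left,
    ← List.range'_append_1, Nat.add_comm 1 m]

namespace DoubleCovers

variable {S : Multiset ℕ} {p m β : ℕ}

theorem roundedSet_shift (hp : 0 < p) (hβ : β ≤ m)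
    (h : DoubleCovers (Finset.Icc 1 m).val (Finset.Icc 1 (m - β)).val S) :
    DoubleCovers (Finset.Icc 1 (m + (S.card + p - 1) / p)).val
      (Finset.Icc 1 (m + (S.card + p - 1) / p - β)).val (roundedSet p S) := by
  set b := (S.card + p - 1) / p
  set l := S.sort (· ≥ ·)
  rcases Nat.eq_zero_or_pos b with hb | hb
  · obtain rfl : S = 0 := by
      rw [← Multiset.card_eq_zero]
      have := (Nat.div_eq_zero_iff.1 hb).resolve_left hp.ne'
      omega
    rw [roundedSet_eq, Multiset.sort_zero]
    simpa [hb, roundedList] using h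
  have hmax : ∀ x ∈ roundedList l b, x ≤ m + (m - β) := fun x hx =>
    h.le_add_of_mem (fun y hy => (Finset.mem_Icc.1 hy).2) (fun y hy => (Finset.mem_Icc.1 hy).2)
      ((Multiset.mem_sort _).1 (mem_of_mem_roundedList hx))
  have htake : Dominates (.replicate b (m + (m - β))) ((roundedList l b).take b) := by
    rw [← Multiset.coe_replicate]
    refine Dominates.of_getElem_le (by simp) fun i hi => ?_
    rw [List.getElem_replicate]
    exact hmax _ (List.mem_of_mem_take (List.getElem_mem hi))
  have hfirst := (DoubleCovers.replicate b (by omega : m + (m - β) ≤ m + 1 + (m - β + 1))).mono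
    (dominates_Icc_replicate m b) (dominates_Icc_replicate (m - β) b) htake
  have hrest : DoubleCovers (Finset.Icc 1 m).val (Finset.Icc 1 (m - β)).val
      ((roundedList l b).drop b) := by
    refine h.mono_target ?_
    rw [← Multiset.sort_eq S (· ≥ ·)]
    exact dominates_drop_roundedList (sortedGE_sort S) hb
  have hsplit : (((roundedList l b).drop b : List ℕ) + ((roundedList l b).take b : List ℕ) :
      Multiset ℕ) = roundedSet p S := by
    rw [Multiset.coe_add, Multiset.coe_eq_coe.2 List.perm_append_comm, List.take_append_drop]
    rfl
  rw [Nat.sub_add_comm hβ, val_Icc_one_add, val_Icc_one_add, ← hsplit]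
  exact hrest.add hfirst

theorem of_roundedSet (hp : 0 < p) (hβ : β ≤ m)
    (h : DoubleCovers (roundedSet p (Finset.Icc 1 m).val)
      (roundedSet p (Finset.Icc 1 (m - β)).val) (roundedSet p S)) :
    DoubleCovers (Finset.Icc 1 (m + (m + p - 1) / p)).val
      (Finset.Icc 1 (m + (m + p - 1) / p - β)).val S := by
  refine h.mono (dominates_Icc_roundedSet_Icc hp le_rfl) ?_ (roundedSet_dominates p S)
  rw [Nat.sub_add_comm hβ]
  exact dominates_Icc_roundedSet_Icc hp (Nat.div_le_div_right (by omega))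

end DoubleCovers

theorem doubleOPT_spec {S : Multiset ℕ} {β m : ℕ} (hβ : β ≤ m)
    (h : DoubleCovers (Finset.Icc 1 m).val (Finset.Icc 1 (m - β)).val S) :
    β ≤ doubleOPT S β ∧
      DoubleCovers (Finset.Icc 1 (doubleOPT S β)).val (Finset.Icc 1 (doubleOPT S β - β)).val S :=
  Nat.sInf_mem (s := {m | β ≤ m ∧
    DoubleCovers (Finset.Icc 1 m).val (Finset.Icc 1 (m - β)).val S}) ⟨m, hβ, h⟩

theorem rounded_double_binarySearch_general (S : Multiset ℕ)
    (β p : ℕ) (hp : 0 < p) (mstar : ℕ)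
    (hleast : IsLeast
      {m | β ≤ m ∧ DoubleCovers (roundedSet p (Finset.Icc 1 m).val)
        (roundedSet p (Finset.Icc 1 (m - β)).val) (roundedSet p S)} mstar) :
    DoubleCovers (Finset.Icc 1 (mstar + (mstar + p - 1) / p)).val
      (Finset.Icc 1 (mstar + (mstar + p - 1) / p - β)).val S ∧
    mstar ≤ doubleOPT S β + (S.card + p - 1) / p := by
  obtain ⟨⟨hβ, hcov⟩, hmin⟩ := hleast
  have hsound := hcov.of_roundedSet hp hβ
  refine ⟨hsound, hmin ?_⟩
  obtain ⟨hβopt, hopt⟩ := doubleOPT_spec (hβ.trans (Nat.le_add_right _ _)) hsound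
  exact ⟨hβopt.trans (Nat.le_add_right _ _), (hopt.roundedSet_shift hp hβopt).mono
    (roundedSet_dominates p _) (roundedSet_dominates p _) (.refl _)⟩

/-- Let `m*` be the least `m ≥ β` such that
`(R_p([m]), R_p([m − β]))` double-covers `R_p(S)`. Then (a) `([m'], [m' − β])` with
`m' = m* + ⌈m*/p⌉` double-covers `S`, and (b) `m* ≤ OPT(S, β) + ⌈n/p⌉`. -/
theorem rounded_double_binarySearch (S : Multiset ℕ) (hS : ∀ x ∈ S, 0 < x)
    (β p : ℕ) (hp : 0 < p) (mstar : ℕ)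
    (hleast : IsLeast
      {m | β ≤ m ∧ DoubleCovers (roundedSet p (Finset.Icc 1 m).val)
        (roundedSet p (Finset.Icc 1 (m - β)).val) (roundedSet p S)} mstar) :
    DoubleCovers (Finset.Icc 1 (mstar + (mstar + p - 1) / p)).val
      (Finset.Icc 1 (mstar + (mstar + p - 1) / p - β)).val S ∧
    mstar ≤ doubleOPT S β + (S.card + p - 1) / p :=
  rounded_double_binarySearch_general S β p hp mstar hleast
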